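/- Let G be a finite simple graph containing a set T of pairwise twin vertices with |T| ≥ 3, let u ∈ T, and let G_u denote the induced subgraph of G on V(G) \ {u}. Then: (i) if S_u is a zero forcing set of G_u, then S_u ∪ {u} is a zero forcing set of G; and (ii) if S is a zero forcing set of G with u ∈ S, then S \ {u} is a zero forcing set of G_u. Consequently S ↦ S \ {u} is a bijection between the zero forcing sets of G containing u and the zero forcing sets of G_u. -/

import Mathlib

/-! A vertex adjacent to one twin is adjacent to all of them, so no vertex can force a twin while
another twin is still white. Hence a zero forcing set misses at most one vertex of a twin set;
with `|T| ≥ 3` it contains a twin `t ≠ u`. A forcing-closed set of `G_u` containing `t` stays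
closed in `G` after adding `u`, since `u` would force exactly what `t` forces; this gives (ii),
and (i) holds for any vertex `u`. -/

/-- The TAR (token addition/removal) graph of a predicate `P` on finite subsets of `V`:
vertices are the `P`-sets, two `P`-sets being adjacent iff their symmetric difference
has exactly one element. -/
def tarGraph {V : Type*} [DecidableEq V] (P : Finset V → Prop) :
    SimpleGraph {S : Finset V // P S} where
  Adj S T := (symmDiff S.1 T.1).card = 1
  symm := by constructor; intro S T h; simpa [symmDiff_comm] using h
  loopless := by constructor; intro S h; simp [symmDiff_self] at h

/-- `S` is a minimal `P`-set: `S` is a `P`-set and no proper subset of `S` is a `P`-set. -/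
def IsMinimalPSet {V : Type*} (P : Finset V → Prop) (S : Finset V) : Prop :=
  P S ∧ ∀ T : Finset V, T ⊂ S → ¬ P T

/-- `R` is `P`-irrelevant: no minimal `P`-set contains any vertex of `R`. -/
def IsIrrelevant {V : Type*} (P : Finset V → Prop) (R : Finset V) : Prop :=
  ∀ S : Finset V, IsMinimalPSet P S → ∀ v ∈ R, v ∉ S

/-- A set `B` is forcing-closed in `G` if no vertex of `B` has exactly one neighbor
outside `B` (i.e. no force can be performed from `B`). The zero forcing closure of `S`
is the smallest forcing-closed set containing `S`. -/
def ZFClosed {V : Type*} (G : SimpleGraph V) (B : Finset V) : Prop :=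
  ∀ v ∈ B, ¬ ∃! w : V, G.Adj v w ∧ w ∉ B

/-- `S` is a zero forcing set of `G`: the zero forcing closure of `S` is all of `V`,
equivalently every forcing-closed set containing `S` is all of `V`. -/
def IsZeroForcingSet {V : Type*} [Fintype V] (G : SimpleGraph V) (S : Finset V) : Prop :=
  ∀ B : Finset V, S ⊆ B → ZFClosed G B → B = Finset.univ

open Finset

theorem Finset.mem_insert_map_val_iff {V : Type*} [DecidableEq V] {u : V}
    {Su : Finset {v : V // v ≠ u}} {x : {v : V // v ≠ u}} :
    (x : V) ∈ insert u (Su.map ⟨Subtype.val, Subtype.val_injective⟩) ↔ x ∈ Su := by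
  rw [mem_insert, or_iff_right x.2]
  exact mem_map' _

theorem Finset.insert_map_val_subtype_ne {V : Type*} [DecidableEq V] {u : V} {S : Finset V}
    (hu : u ∈ S) : insert u ((S.subtype (· ≠ u)).map ⟨Subtype.val, Subtype.val_injective⟩) = S := by
  change insert u ((S.subtype _).map (Function.Embedding.subtype _)) = S
  rw [subtype_map, filter_ne', insert_erase hu]

theorem Finset.subtype_ne_insert_map_val {V : Type*} [DecidableEq V] {u : V}
    {Su : Finset {v : V // v ≠ u}} :
    (insert u (Su.map ⟨Subtype.val, Subtype.val_injective⟩)).subtype (· ≠ u) = Su := by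
  ext x
  rw [mem_subtype, mem_insert_map_val_iff]

section ZeroForcing

variable {V : Type*} {G : SimpleGraph V}

theorem SimpleGraph.adj_of_neighborSet_eq {t₁ t₂ v : V}
    (htwin : G.neighborSet t₁ = G.neighborSet t₂) (h : G.Adj t₁ v) : G.Adj t₂ v := by
  rwa [← SimpleGraph.mem_neighborSet, ← htwin]

theorem ZFClosed.subtype {B : Finset V} (hB : ZFClosed G B) (p : V → Prop) [DecidablePred p]
    (hpB : ∀ v, ¬ p v → v ∈ B) :
    ZFClosed (G.comap (Subtype.val : Subtype p → V)) (B.subtype p) := by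
  rintro v hv ⟨w, ⟨hvw, hw⟩, huniq⟩
  rw [mem_subtype] at hv hw
  refine hB v hv ⟨w, ⟨hvw, hw⟩, fun w' ⟨hvw', hw'⟩ => ?_⟩
  have hpw' : p w' := not_not.mp (mt (hpB w') hw')
  exact congrArg Subtype.val (huniq ⟨w', hpw'⟩ ⟨hvw', by rwa [mem_subtype]⟩)

variable [DecidableEq V]

theorem ZFClosed.insert_map_val {u t : V} (htu : t ≠ u)
    (htwin : G.neighborSet t = G.neighborSet u) {Bu : Finset {v : V // v ≠ u}}
    (hBu : ZFClosed (G.comap (Subtype.val : {v : V // v ≠ u} → V)) Bu) (ht : ⟨t, htu⟩ ∈ Bu) :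
    ZFClosed G (insert u (Bu.map ⟨Subtype.val, Subtype.val_injective⟩)) := by
  rintro v hv ⟨w, ⟨hvw, hwB⟩, huniq⟩
  obtain ⟨s, hs, hsv⟩ : ∃ s ∈ Bu, G.neighborSet s = G.neighborSet v := by
    by_cases hvu : v = u
    · exact ⟨_, ht, hvu ▸ htwin⟩
    · exact ⟨⟨v, hvu⟩, mem_insert_map_val_iff.mp hv, rfl⟩
  have hwu : w ≠ u := by rintro rfl; exact hwB (mem_insert_self _ _)
  refine hBu s hs ⟨⟨w, hwu⟩, ⟨?_, fun h => hwB (mem_insert_map_val_iff.mpr h)⟩, ?_⟩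
  · exact G.adj_of_neighborSet_eq hsv.symm hvw
  · rintro w' ⟨hsw', hw'⟩
    exact Subtype.ext
      (huniq w' ⟨G.adj_of_neighborSet_eq hsv hsw', mt mem_insert_map_val_iff.mp hw'⟩)

variable [Fintype V]

theorem zfClosed_compl_pair_of_neighborSet_eq {t₁ t₂ : V} (hne : t₁ ≠ t₂)
    (htwin : G.neighborSet t₁ = G.neighborSet t₂) : ZFClosed G {t₁, t₂}ᶜ := by
  rintro v - ⟨w, ⟨hvw, hw⟩, huniq⟩
  simp only [mem_compl, not_not, mem_insert, mem_singleton] at hw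
  rcases hw with rfl | rfl
  · exact hne (huniq t₂ ⟨(G.adj_of_neighborSet_eq htwin hvw.symm).symm, by simp⟩).symm
  · exact hne (huniq t₁ ⟨(G.adj_of_neighborSet_eq htwin.symm hvw.symm).symm, by simp⟩)

theorem IsZeroForcingSet.mem_or_mem_of_neighborSet_eq {S : Finset V} (hS : IsZeroForcingSet G S)
    {t₁ t₂ : V} (hne : t₁ ≠ t₂) (htwin : G.neighborSet t₁ = G.neighborSet t₂) :
    t₁ ∈ S ∨ t₂ ∈ S := by
  by_contra! h
  have hS' : S ⊆ {t₁, t₂}ᶜ := by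
    intro x hx
    simp only [mem_compl, mem_insert, mem_singleton]
    rintro (rfl | rfl) <;> simp_all
  have := hS _ hS' (zfClosed_compl_pair_of_neighborSet_eq hne htwin)
  simpa using congrArg (t₁ ∈ ·) this

theorem IsZeroForcingSet.insert_map_val {u : V} {Su : Finset {v : V // v ≠ u}}
    (hSu : IsZeroForcingSet (G.comap (Subtype.val : {v : V // v ≠ u} → V)) Su) :
    IsZeroForcingSet G (insert u (Su.map ⟨Subtype.val, Subtype.val_injective⟩)) := by
  intro B hSB hB
  have huB : u ∈ B := hSB (mem_insert_self u _)
  have hBu := hSu _ (fun x hx => mem_subtype.mpr (hSB (mem_insert_map_val_iff.mpr hx)))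
    (hB.subtype (· ≠ u) fun v hv => not_not.mp hv ▸ huB)
  refine eq_univ_of_forall fun x => ?_
  by_cases hxu : x = u
  · exact hxu ▸ huB
  · exact mem_subtype.mp (hBu ▸ mem_univ (⟨x, hxu⟩ : {v : V // v ≠ u}))

theorem IsZeroForcingSet.subtype_ne {S : Finset V} (hS : IsZeroForcingSet G S) {u t : V}
    (htu : t ≠ u) (htwin : G.neighborSet t = G.neighborSet u) (ht : t ∈ S) :
    IsZeroForcingSet (G.comap (Subtype.val : {v : V // v ≠ u} → V)) (S.subtype (· ≠ u)) := by
  intro Bu hSBu hBu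
  have hB := hS _ ?_ (hBu.insert_map_val htu htwin (hSBu (mem_subtype.mpr ht)))
  · ext x
    simpa using mem_insert_map_val_iff.mp (hB ▸ mem_univ (x : V))
  · intro x hx
    by_cases hxu : x = u
    · exact mem_insert.mpr (Or.inl hxu)
    · exact mem_insert_map_val_iff (x := ⟨x, hxu⟩) |>.mpr (hSBu (mem_subtype.mpr hx))

theorem IsZeroForcingSet.subtype_ne_of_twin_set {S : Finset V} (hS : IsZeroForcingSet G S)
    {T : Finset V} (hT : 3 ≤ #T)
    (htwin : ∀ v ∈ T, ∀ w ∈ T, v ≠ w → G.neighborSet v = G.neighborSet w) {u : V} (hu : u ∈ T) :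
    IsZeroForcingSet (G.comap (Subtype.val : {v : V // v ≠ u} → V)) (S.subtype (· ≠ u)) := by
  have twin_u : ∀ t ∈ T.erase u, G.neighborSet t = G.neighborSet u := fun t ht =>
    htwin t (mem_of_mem_erase ht) u hu (ne_of_mem_erase ht)
  obtain ⟨t₁, ht₁, t₂, ht₂, hne⟩ : ∃ a ∈ T.erase u, ∃ b ∈ T.erase u, a ≠ b := by
    rw [← one_lt_card, card_erase_of_mem hu]
    omega
  obtain ⟨t, htT, htS⟩ : ∃ t ∈ T.erase u, t ∈ S :=
    (hS.mem_or_mem_of_neighborSet_eq hne ((twin_u t₁ ht₁).trans (twin_u t₂ ht₂).symm)).elim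
      (⟨t₁, ht₁, ·⟩) (⟨t₂, ht₂, ·⟩)
  exact hS.subtype_ne (ne_of_mem_erase htT) (twin_u t htT) htS

end ZeroForcing

/-- Let `G` contain a set `T` of pairwise twins with `|T| ≥ 3`, let `u ∈ T`, and let
`G_u` be the induced subgraph of `G` on `V \ {u}`. Then (i) if `S_u` is a zero forcing
set of `G_u` then `S_u ∪ {u}` is a zero forcing set of `G`; (ii) if `S` is a zero
forcing set of `G` with `u ∈ S` then `S \ {u}` is a zero forcing set of `G_u`; and
consequently `S ↦ S \ {u}` is a bijection between the zero forcing sets of `G`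
containing `u` and the zero forcing sets of `G_u`. -/
theorem twin_deletion_zfs {V : Type*} [Fintype V] [DecidableEq V]
    (G : SimpleGraph V) (T : Finset V) (hT : 3 ≤ T.card)
    (htwin : ∀ v ∈ T, ∀ w ∈ T, v ≠ w → G.neighborSet v = G.neighborSet w)
    (u : V) (hu : u ∈ T) :
    (∀ Su : Finset {v : V // v ≠ u},
        IsZeroForcingSet (G.comap (Subtype.val : {v : V // v ≠ u} → V)) Su →
        IsZeroForcingSet G (insert u (Su.map ⟨Subtype.val, Subtype.val_injective⟩))) ∧
    (∀ S : Finset V, IsZeroForcingSet G S → u ∈ S →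
        IsZeroForcingSet (G.comap (Subtype.val : {v : V // v ≠ u} → V))
          (S.subtype (· ≠ u))) ∧
    ∃ e : {S : Finset V // IsZeroForcingSet G S ∧ u ∈ S} ≃
        {Su : Finset {v : V // v ≠ u} //
          IsZeroForcingSet (G.comap (Subtype.val : {v : V // v ≠ u} → V)) Su},
      ∀ S, (e S).1 = S.1.subtype (· ≠ u) := by
  refine ⟨fun _ => IsZeroForcingSet.insert_map_val,
    fun S hS _ => hS.subtype_ne_of_twin_set hT htwin hu, ?_⟩
  exact ⟨{ toFun S := ⟨_, S.2.1.subtype_ne_of_twin_set hT htwin hu⟩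
           invFun Su := ⟨_, Su.2.insert_map_val, mem_insert_self _ _⟩
           left_inv S := Subtype.ext (insert_map_val_subtype_ne S.2.2)
           right_inv _ := Subtype.ext subtype_ne_insert_map_val }, fun _ => rfl⟩
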